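/- arXiv:2208.10027 — 3 statements merged into one kernel-verified Lean document; each statement's English description precedes it below -/
import Mathlib

section
/- Let p ≥ 1, let h, g ∈ ℝ^p, A ∈ ℝ^{p×p}, and let e_V : Ω → ℝ and e_X : Ω → ℝ^p be centered square-integrable random variables on a probability space. Set σ² := Var(e_V), v ∈ ℝ^p with v_i := Cov(e_{X,i}, e_V), and Σ ∈ ℝ^{p×p} with Σ_{ij} := Cov(e_{X,i}, e_{X,j}). Assume I − A − g h^⊤ is invertible with inverse M, and define the random variables V : Ω → ℝ and X : Ω → ℝ^p by (V, X^⊤)^⊤ := (I − Ã)^{-1}(e_V, e_X^⊤)^⊤, where Ã is the (1+p)×(1+p) block matrix with blocks [0, h^⊤; g, A] (equivalently, V = h^⊤X + e_V and X = gV + AX + e_X). Let Σ̃ := Σ + v g^⊤ + g v^⊤ and assume Σ̃ is invertible and 1 + σ² g^⊤ Σ̃^{-1} g ≠ 0; set c := (1 + σ² g^⊤ Σ̃^{-1} g)^{-1}. Then the covariance matrix Cov(X, X) is invertible and the population ordinary least squares coefficient θ := Cov(X, X)^{-1} Cov(X, V) satisfies θ = [c − g^⊤ Σ̃^{-1} (I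 − c σ² g g^⊤ Σ̃^{-1}) v] · h + (I − A^⊤) [c σ² Σ̃^{-1} g + Σ̃^{-1} (I − c σ² g g^⊤ Σ̃^{-1}) v]. -/
/-!
Put `W := e_V • g + e_X`. Substituting `V` into the equation for `X` gives
`(I - A - g hᵀ) X = W`, hence `X = M W`, `Cov(X, X) = M B Mᵀ` with
`B = Cov(W, W) = Σ̃ + σ² g gᵀ`, and `Cov(X, V) = Cov(X, X) h + M (σ² g + v)`. Therefore
`θ = h + (I - A - g hᵀ)ᵀ B⁻¹ (σ² g + v)`, and the Sherman–Morrison formula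
`B⁻¹ = Σ̃⁻¹ (I - c σ² g gᵀ Σ̃⁻¹)` turns this into the stated expression.
-/

open MeasureTheory Matrix

theorem one_sub_sub_vecMulVec_mulVec_eq {R n : Type*} [CommRing R] [Fintype n] [DecidableEq n]
    {A : Matrix n n R} {g h x e : n → R} {y ε : R}
    (hy : y = h ⬝ᵥ x + ε) (hx : x = y • g + A *ᵥ x + e) :
    (1 - A - vecMulVec g h) *ᵥ x = ε • g + e := by
  rw [sub_mulVec, sub_mulVec, one_mulVec, vecMulVec_mulVec, op_smul_eq_smul]
  nth_rewrite 1 [hx]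
  rw [hy]
  module

section

variable {K n : Type*} [Field K] [Fintype n] [DecidableEq n]

theorem Matrix.add_vecMulVec_mul_eq_one {S : Matrix n n K} (hS : IsUnit S.det) (a b : n → K)
    {c : K} (hc : c * (1 + b ⬝ᵥ (S⁻¹ *ᵥ a)) = 1) :
    (S + vecMulVec a b) * (S⁻¹ * (1 - c • (vecMulVec a b * S⁻¹))) = 1 := by
  set d := b ⬝ᵥ (S⁻¹ *ᵥ a)
  set Q := vecMulVec a b * S⁻¹
  have hQQ : Q * Q = d • Q := by
    rw [Matrix.mul_assoc, ← Matrix.mul_assoc S⁻¹, mul_vecMulVec, ← Matrix.mul_assoc,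
      vecMulVec_mul_vecMulVec, vecMulVec_smul, smul_mul_assoc]
  have hSQ : (S + vecMulVec a b) * S⁻¹ = 1 + Q := by
    rw [add_mul, mul_nonsing_inv S hS]
  rw [← Matrix.mul_assoc, hSQ, mul_sub, mul_one, add_mul, one_mul, mul_smul_comm, hQQ,
    smul_smul]
  calc 1 + Q - (c • Q + (c * d) • Q) = 1 + (1 - c * (1 + d)) • Q := by module
    _ = 1 := by rw [hc, sub_self, zero_smul, add_zero]

theorem Matrix.inv_mul_mul_transpose_mulVec {M N B : Matrix n n K} (hMN : M * N = 1)
    (hB : IsUnit B.det) (h b : n → K) :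
    IsUnit (M * B * Mᵀ).det ∧
      (M * B * Mᵀ)⁻¹ *ᵥ ((M * B * Mᵀ) *ᵥ h + M *ᵥ b) = h + Nᵀ *ᵥ (B⁻¹ *ᵥ b) := by
  have hM : IsUnit M.det := isUnit_det_of_right_inverse hMN
  have hC : IsUnit (M * B * Mᵀ).det := by
    rw [det_mul, det_mul, det_transpose]; exact (hM.mul hB).mul hM
  have hMtNt : Mᵀ * Nᵀ = 1 := by rw [← transpose_mul, mul_eq_one_comm.mp hMN, transpose_one]
  have hCu : (M * B * Mᵀ) *ᵥ (h + Nᵀ *ᵥ (B⁻¹ *ᵥ b)) = (M * B * Mᵀ) *ᵥ h + M *ᵥ b := by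
    rw [mulVec_add, mulVec_mulVec, mulVec_mulVec, Matrix.mul_assoc (M * B), hMtNt,
      Matrix.mul_one, Matrix.mul_assoc M B B⁻¹, mul_nonsing_inv B hB, Matrix.mul_one]
  refine ⟨hC, ?_⟩
  rw [← hCu, mulVec_mulVec, nonsing_inv_mul _ hC, one_mulVec]

theorem ols_coefficient_of_reduced_form {A M S : Matrix n n K} {g h v : n → K} {σ c : K}
    (hM : M * (1 - A - vecMulVec g h) = 1) (hS : IsUnit S.det)
    (hc : c * (1 + σ * (g ⬝ᵥ (S⁻¹ *ᵥ g))) = 1) :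
    IsUnit (M * (S + σ • vecMulVec g g) * Mᵀ).det ∧
      (M * (S + σ • vecMulVec g g) * Mᵀ)⁻¹ *ᵥ
          ((M * (S + σ • vecMulVec g g) * Mᵀ) *ᵥ h + M *ᵥ (σ • g + v)) =
        (c - g ⬝ᵥ (S⁻¹ *ᵥ ((1 - (c * σ) • (vecMulVec g g * S⁻¹)) *ᵥ v))) • h +
          (1 - Aᵀ) *ᵥ ((c * σ) • (S⁻¹ *ᵥ g) +
            S⁻¹ *ᵥ ((1 - (c * σ) • (vecMulVec g g * S⁻¹)) *ᵥ v)) := by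
  set R := 1 - (c * σ) • (vecMulVec g g * S⁻¹)
  set w := S⁻¹ *ᵥ (R *ᵥ v)
  have hd : g ⬝ᵥ (S⁻¹ *ᵥ (σ • g)) = σ * (g ⬝ᵥ (S⁻¹ *ᵥ g)) := by
    rw [mulVec_smul, dotProduct_smul, smul_eq_mul]
  have hSM : (S + σ • vecMulVec g g) * (S⁻¹ * R) = 1 := by
    have := add_vecMulVec_mul_eq_one hS (σ • g) g (c := c) (by rw [hd]; exact hc)
    rwa [smul_vecMulVec, smul_mul_assoc, smul_smul] at this
  have hRg : R *ᵥ (σ • g) = (c * σ) • g := by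
    rw [sub_mulVec, one_mulVec, smul_mulVec, ← mulVec_mulVec, vecMulVec_mulVec,
      op_smul_eq_smul, hd, smul_smul, ← sub_smul]
    congr 1
    linear_combination -σ * hc
  obtain ⟨hC, hθ⟩ :=
    inv_mul_mul_transpose_mulVec hM (isUnit_det_of_right_inverse hSM) h (σ • g + v)
  refine ⟨hC, ?_⟩
  have hgu : g ⬝ᵥ ((c * σ) • (S⁻¹ *ᵥ g) + w) = c * σ * (g ⬝ᵥ (S⁻¹ *ᵥ g)) + g ⬝ᵥ w := by
    rw [dotProduct_add, dotProduct_smul, smul_eq_mul]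
  rw [hθ, inv_eq_right_inv hSM, ← mulVec_mulVec, mulVec_add, hRg, mulVec_add, mulVec_smul,
    transpose_sub, transpose_sub, transpose_one, transpose_vecMulVec, sub_mulVec,
    vecMulVec_mulVec, op_smul_eq_smul, hgu]
  linear_combination (norm := module) -hc • h

end

section SecondMoments

variable {Ω l m n : Type*} [MeasurableSpace Ω] {μ : Measure Ω}

theorem MeasureTheory.MemLp.integrable_fun_mul {p q : ENNReal} [p.HolderTriple q 1]
    {f g : Ω → ℝ} (hf : MemLp f p μ) (hg : MemLp g q μ) : Integrable (fun ω => f ω * g ω) μ :=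
  hf.integrable_mul hg

theorem memLp_dotProduct [Fintype m] {q : ENNReal} {Y : Ω → m → ℝ}
    (hY : ∀ i, MemLp (fun ω => Y ω i) q μ) (a : m → ℝ) : MemLp (fun ω => a ⬝ᵥ Y ω) q μ :=
  memLp_finsetSum _ fun i _ => (hY i).const_mul (a i)

theorem integral_dotProduct_mul [Fintype m] {Y : Ω → m → ℝ} {f : Ω → ℝ}
    (hYf : ∀ i, Integrable (fun ω => Y ω i * f ω) μ) (a : m → ℝ) :
    ∫ ω, (a ⬝ᵥ Y ω) * f ω ∂μ = a ⬝ᵥ fun i => ∫ ω, Y ω i * f ω ∂μ := by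
  simp only [dotProduct, Finset.sum_mul, mul_assoc]
  rw [integral_finsetSum _ fun i _ => (hYf i).const_mul (a i)]
  simp only [integral_const_mul]

variable (μ) in
noncomputable def crossMoment (Y : Ω → m → ℝ) (Z : Ω → n → ℝ) : Matrix m n ℝ :=
  of fun i j => ∫ ω, Y ω i * Z ω j ∂μ

theorem crossMoment_transpose (Y : Ω → m → ℝ) (Z : Ω → n → ℝ) :
    (crossMoment μ Y Z)ᵀ = crossMoment μ Z Y := by
  ext i j
  simp only [crossMoment, transpose_apply, of_apply, mul_comm]

theorem crossMoment_mulVec_left [Fintype m] {Y : Ω → m → ℝ} {Z : Ω → n → ℝ}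
    (hYZ : ∀ i j, Integrable (fun ω => Y ω i * Z ω j) μ) (P : Matrix l m ℝ) :
    crossMoment μ (fun ω => P *ᵥ Y ω) Z = P * crossMoment μ Y Z := by
  ext i j
  exact integral_dotProduct_mul (fun k => hYZ k j) (P i)

theorem crossMoment_mulVec_mulVec [Fintype m] {Y : Ω → m → ℝ}
    (hY : ∀ i, MemLp (fun ω => Y ω i) 2 μ) (P Q : Matrix l m ℝ) :
    crossMoment μ (fun ω => P *ᵥ Y ω) (fun ω => Q *ᵥ Y ω) = P * crossMoment μ Y Y * Qᵀ := by
  have hYQY : ∀ i j, Integrable (fun ω => Y ω i * (Q *ᵥ Y ω) j) μ := fun i j =>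
    (hY i).integrable_fun_mul (memLp_dotProduct hY (Q j))
  have hYY : ∀ i j, Integrable (fun ω => Y ω i * Y ω j) μ := fun i j =>
    (hY i).integrable_fun_mul (hY j)
  rw [crossMoment_mulVec_left hYQY, ← crossMoment_transpose, crossMoment_mulVec_left hYY,
    transpose_mul, crossMoment_transpose, Matrix.mul_assoc]

theorem integral_mulVec_mul [Fintype m] {Y : Ω → m → ℝ} {f : Ω → ℝ}
    (hYf : ∀ i, Integrable (fun ω => Y ω i * f ω) μ) (P : Matrix l m ℝ) :
    (fun i => ∫ ω, (P *ᵥ Y ω) i * f ω ∂μ) = P *ᵥ fun k => ∫ ω, Y ω k * f ω ∂μ :=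
  funext fun i => integral_dotProduct_mul hYf (P i)

theorem integral_mul_dotProduct_add [Fintype m] {Y : Ω → m → ℝ} {e : Ω → ℝ}
    (hY : ∀ i, MemLp (fun ω => Y ω i) 2 μ) (he : MemLp e 2 μ) (a : m → ℝ) :
    (fun i => ∫ ω, Y ω i * (a ⬝ᵥ Y ω + e ω) ∂μ) =
      crossMoment μ Y Y *ᵥ a + fun i => ∫ ω, Y ω i * e ω ∂μ := by
  funext i
  simp only [mul_add]
  rw [integral_add ((hY i).integrable_fun_mul (memLp_dotProduct hY a))
    ((hY i).integrable_fun_mul he)]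
  simp only [mul_comm (Y _ i) (a ⬝ᵥ _)]
  rw [integral_dotProduct_mul (fun j => (hY j).integrable_fun_mul (hY i))]
  change (a ᵥ* crossMoment μ Y Y) i + _ = _
  rw [← mulVec_transpose, crossMoment_transpose]
  rfl

theorem crossMoment_smul_add_self {s : Ω → ℝ} {Y : Ω → m → ℝ} (hs : MemLp s 2 μ)
    (hY : ∀ i, MemLp (fun ω => Y ω i) 2 μ) (a : m → ℝ) :
    crossMoment μ (fun ω => s ω • a + Y ω) (fun ω => s ω • a + Y ω) =
      crossMoment μ Y Y + vecMulVec (fun i => ∫ ω, Y ω i * s ω ∂μ) a +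
        vecMulVec a (fun i => ∫ ω, Y ω i * s ω ∂μ) + (∫ ω, s ω * s ω ∂μ) • vecMulVec a a := by
  ext i j
  have hss := hs.integrable_fun_mul hs
  have hYs : ∀ k, Integrable (fun ω => Y ω k * s ω) μ := fun k => (hY k).integrable_fun_mul hs
  have hYY := (hY i).integrable_fun_mul (hY j)
  have hexpand : ∀ ω, (s ω • a + Y ω) i * (s ω • a + Y ω) j =
      Y ω i * Y ω j + a j * (Y ω i * s ω) + a i * (Y ω j * s ω) + a i * a j * (s ω * s ω) := by
    intro ω
    simp only [Pi.add_apply, Pi.smul_apply, smul_eq_mul]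
    ring
  simp only [crossMoment, of_apply, hexpand]
  rw [integral_add (by fun_prop) (by fun_prop), integral_add (by fun_prop) (by fun_prop),
    integral_add (by fun_prop) (by fun_prop), integral_const_mul, integral_const_mul,
    integral_const_mul]
  simp only [Matrix.add_apply, Matrix.smul_apply, vecMulVec_apply, of_apply, smul_eq_mul]
  ring

theorem integral_smul_add_mul {s : Ω → ℝ} {Y : Ω → m → ℝ} (hs : MemLp s 2 μ)
    (hY : ∀ i, MemLp (fun ω => Y ω i) 2 μ) (a : m → ℝ) :
    (fun i => ∫ ω, (s ω • a + Y ω) i * s ω ∂μ) =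
      (∫ ω, s ω * s ω ∂μ) • a + fun i => ∫ ω, Y ω i * s ω ∂μ := by
  funext i
  have hexpand : ∀ ω, (s ω • a + Y ω) i * s ω = a i * (s ω * s ω) + Y ω i * s ω := by
    intro ω
    simp only [Pi.add_apply, Pi.smul_apply, smul_eq_mul]
    ring
  simp only [hexpand]
  have hss := hs.integrable_fun_mul hs
  have hYs := (hY i).integrable_fun_mul hs
  rw [integral_add (by fun_prop) (by fun_prop), integral_const_mul]
  simp only [Pi.add_apply, Pi.smul_apply, smul_eq_mul, mul_comm]

end SecondMoments

theorem stmt_0_general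
    {Ω : Type*} [MeasurableSpace Ω] (μ : Measure Ω)
    (p : ℕ)
    (h g : Fin p → ℝ) (A : Matrix (Fin p) (Fin p) ℝ)
    (eV : Ω → ℝ) (eX : Ω → Fin p → ℝ)
    (heV : MemLp eV 2 μ) (heX : ∀ i, MemLp (fun ω => eX ω i) 2 μ)
    (M : Matrix (Fin p) (Fin p) ℝ)
    (hM₂ : M * (1 - A - vecMulVec g h) = 1)
    (V : Ω → ℝ) (X : Ω → Fin p → ℝ)
    (hV : ∀ ω, V ω = h ⬝ᵥ X ω + eV ω)
    (hX : ∀ ω, X ω = V ω • g + A *ᵥ X ω + eX ω)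
    (σ2 : ℝ) (hσ2 : σ2 = ∫ ω, eV ω * eV ω ∂μ)
    (v : Fin p → ℝ) (hv : ∀ i, v i = ∫ ω, eX ω i * eV ω ∂μ)
    (S : Matrix (Fin p) (Fin p) ℝ) (hS : ∀ i j, S i j = ∫ ω, eX ω i * eX ω j ∂μ)
    (St : Matrix (Fin p) (Fin p) ℝ)
    (hStdef : St = S + vecMulVec v g + vecMulVec g v)
    (hSt : IsUnit St.det)
    (hden : 1 + σ2 * (g ⬝ᵥ (St⁻¹ *ᵥ g)) ≠ 0)
    (c : ℝ) (hc : c = (1 + σ2 * (g ⬝ᵥ (St⁻¹ *ᵥ g)))⁻¹)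
    (CovXX : Matrix (Fin p) (Fin p) ℝ)
    (hCovXX : ∀ i j, CovXX i j = ∫ ω, X ω i * X ω j ∂μ)
    (CovXV : Fin p → ℝ)
    (hCovXV : ∀ i, CovXV i = ∫ ω, X ω i * V ω ∂μ) :
    IsUnit CovXX.det ∧
      CovXX⁻¹ *ᵥ CovXV =
        (c - g ⬝ᵥ (St⁻¹ *ᵥ ((1 - (c * σ2) • (vecMulVec g g * St⁻¹)) *ᵥ v))) • h +
          (1 - Aᵀ) *ᵥ ((c * σ2) • (St⁻¹ *ᵥ g) +
            St⁻¹ *ᵥ ((1 - (c * σ2) • (vecMulVec g g * St⁻¹)) *ᵥ v)) := by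
  set W : Ω → Fin p → ℝ := fun ω => eV ω • g + eX ω
  have hW : ∀ k, MemLp (fun ω => W ω k) 2 μ := fun k => (heV.mul_const (g k)).add (heX k)
  have hXW : X = fun ω => M *ᵥ W ω := funext fun ω => by
    rw [← one_mulVec (X ω), ← hM₂, ← mulVec_mulVec,
      one_sub_sub_vecMulVec_mulVec_eq (hV ω) (hX ω)]
  have hX2 : ∀ i, MemLp (fun ω => X ω i) 2 μ := hXW ▸ fun i => memLp_dotProduct hW (M i)
  have hCovXX' : CovXX = crossMoment μ X X := Matrix.ext hCovXX
  have hS' : S = crossMoment μ eX eX := Matrix.ext hS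
  have hv' : v = fun i => ∫ ω, eX ω i * eV ω ∂μ := funext hv
  have hXX : CovXX = M * (St + σ2 • vecMulVec g g) * Mᵀ := by
    rw [hCovXX', hXW, crossMoment_mulVec_mulVec hW, crossMoment_smul_add_self heV heX, hStdef,
      hS', hv', hσ2]
  have hXV : CovXV = CovXX *ᵥ h + M *ᵥ (σ2 • g + v) := by
    have hCovXV' : CovXV = fun i => ∫ ω, X ω i * (h ⬝ᵥ X ω + eV ω) ∂μ := by
      funext i; simp only [hCovXV, hV]
    rw [hCovXV', integral_mul_dotProduct_add hX2 heV, ← hCovXX', hXW,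
      integral_mulVec_mul (fun k => (hW k).integrable_fun_mul heV),
      integral_smul_add_mul heV heX, hσ2, hv']
  have hcd : c * (1 + σ2 * (g ⬝ᵥ (St⁻¹ *ᵥ g))) = 1 := hc ▸ inv_mul_cancel₀ hden
  rw [hXV, hXX]
  exact ols_coefficient_of_reduced_form hM₂ hSt hcd

/-- Population OLS coefficient of a linear model with dependent noise.
`V` and `X` solve the linear system `V = hᵀ X + e_V`, `X = g V + A X + e_X` (equivalently,
`(V, X) = (I − Ã)⁻¹ (e_V, e_X)` with `Ã = [0, hᵀ; g, A]`, whose invertibility is encoded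
by the inverse `M` of `I − A − g hᵀ`). With `σ² = Var(e_V)`, `v = Cov(e_X, e_V)`,
`Σ = Cov(e_X, e_X)`, `Σ̃ = Σ + v gᵀ + g vᵀ` invertible, and
`c = (1 + σ² gᵀ Σ̃⁻¹ g)⁻¹`, the covariance matrix `Cov(X, X)` is invertible and
`θ = Cov(X,X)⁻¹ Cov(X,V)` equals
`[c − gᵀ Σ̃⁻¹ (I − c σ² g gᵀ Σ̃⁻¹) v] h + (I − Aᵀ)[c σ² Σ̃⁻¹ g + Σ̃⁻¹ (I − c σ² g gᵀ Σ̃⁻¹) v]`. -/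
theorem stmt_0
    {Ω : Type*} [MeasurableSpace Ω] (μ : Measure Ω) [IsProbabilityMeasure μ]
    (p : ℕ) (hp : 1 ≤ p)
    (h g : Fin p → ℝ) (A : Matrix (Fin p) (Fin p) ℝ)
    (eV : Ω → ℝ) (eX : Ω → Fin p → ℝ)
    (heV : MemLp eV 2 μ) (heX : ∀ i, MemLp (fun ω => eX ω i) 2 μ)
    (heV0 : ∫ ω, eV ω ∂μ = 0) (heX0 : ∀ i, ∫ ω, eX ω i ∂μ = 0)
    (M : Matrix (Fin p) (Fin p) ℝ)
    (hM₁ : (1 - A - vecMulVec g h) * M = 1)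
    (hM₂ : M * (1 - A - vecMulVec g h) = 1)
    (V : Ω → ℝ) (X : Ω → Fin p → ℝ)
    (hV : ∀ ω, V ω = h ⬝ᵥ X ω + eV ω)
    (hX : ∀ ω, X ω = V ω • g + A *ᵥ X ω + eX ω)
    (σ2 : ℝ) (hσ2 : σ2 = ∫ ω, eV ω * eV ω ∂μ)
    (v : Fin p → ℝ) (hv : ∀ i, v i = ∫ ω, eX ω i * eV ω ∂μ)
    (S : Matrix (Fin p) (Fin p) ℝ) (hS : ∀ i j, S i j = ∫ ω, eX ω i * eX ω j ∂μ)
    (St : Matrix (Fin p) (Fin p) ℝ)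
    (hStdef : St = S + vecMulVec v g + vecMulVec g v)
    (hSt : IsUnit St.det)
    (hden : 1 + σ2 * (g ⬝ᵥ (St⁻¹ *ᵥ g)) ≠ 0)
    (c : ℝ) (hc : c = (1 + σ2 * (g ⬝ᵥ (St⁻¹ *ᵥ g)))⁻¹)
    (CovXX : Matrix (Fin p) (Fin p) ℝ)
    (hCovXX : ∀ i j, CovXX i j = ∫ ω, X ω i * X ω j ∂μ)
    (CovXV : Fin p → ℝ)
    (hCovXV : ∀ i, CovXV i = ∫ ω, X ω i * V ω ∂μ) :
    IsUnit CovXX.det ∧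
      CovXX⁻¹ *ᵥ CovXV =
        (c - g ⬝ᵥ (St⁻¹ *ᵥ ((1 - (c * σ2) • (vecMulVec g g * St⁻¹)) *ᵥ v))) • h +
          (1 - Aᵀ) *ᵥ ((c * σ2) • (St⁻¹ *ᵥ g) +
            St⁻¹ *ᵥ ((1 - (c * σ2) • (vecMulVec g g * St⁻¹)) *ᵥ v)) :=
  stmt_0_general μ p h g A eV eX heV heX M hM₂ V X hV hX σ2 hσ2 v hv S hS St hStdef hSt hden c hc
    CovXX hCovXX CovXV hCovXV
end

section
/- Consider a linear structural causal model with interventions on the response, in second-moment form: fix d ≥ 1, γ, β ∈ ℝ^d, B ∈ ℝ^{d×d}, a diagonal matrix Σ ∈ ℝ^{d×d} with positive diagonal entries, σ² > 0, a nonempty set E of environments, and α : E → ℝ^d; set PE := {j : ∃ e ∈ E, α(e)_j ≠ 0}, assume acyclicity (there is an injective function r from {1,…,d} ∪ {Y} to ℕ with B_{ij} ≠ 0 ⟹ r(j) < r(i), γ_i ≠ 0 ⟹ r(Y) < r(i), and (β_j ≠ 0 or j ∈ PE) ⟹ r(j) < r(Y)), and define C(e) := γ (β + α(e))^⊤ +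 B. Then I − C(e) is invertible for every e ∈ E; the matrix Σ_X(e) := (I − C(e))^{-1}(Σ + σ² γ γ^⊤)(I − C(e))^{-⊤} is positive definite; and, setting Σ_{XY}(e) := Σ_X(e)(β + α(e)) + σ² (I − C(e))^{-1} γ, for every subset S with PE ⊆ S ⊆ {1,…,d} there exist λ_Y ∈ ℝ and η_Y ∈ ℝ^d, not depending on e, such that for every e ∈ E the vector θ_S(e) := ((Σ_X(e))_{S,S})^{-1} (Σ_{XY}(e))_S, extended by zeros to a vector in ℝ^d, equals λ_Y (β + α(e)) + η_Y. -/
/-!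
Let `u = (I - B)⁻¹` and `g = u γ`, the total effect of `Y` on `X`. By acyclicity `g` vanishes on
every node not after `Y`, in particular on the parents of `Y`, so `bᵀ g = 0` for every
`b = β + α(e)`. Hence `I - C(e) = (I - B)(I - g bᵀ)` has inverse `(I + g bᵀ) u`, and
`Σ_X(e) = (I + g bᵀ) N (I + b gᵀ)` with `N = u (Σ + σ² γ γᵀ) uᵀ` independent of `e`. The residual
`Σ_{XY}(e) - Σ_X(e) w` is then `N c + (bᵀ N c + σ²) g` with `c = (1 - gᵀ w) b - w`.

Fix an environment `e₀`, let `t₀ = θ_S(e₀)` and `λ = 1 - gᵀ t₀`. For `w = λ b(e) + t₀ - λ b(e₀)`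
the vector `c` is the one of `t₀` in `e₀`, and `bᵀ N c` does not depend on `e`: the normal
equations of `t₀` at `e₀`, read on `PE ⊆ S` where `g = 0`, say that `N c` vanishes on `PE`. So `w`
is supported in `S` and solves the normal equations in environment `e`, i.e. `w = θ_S(e)`.
-/

open Matrix

namespace Matrix

variable {n R K : Type*} [Fintype n] [DecidableEq n]

section Acyclic

theorem apply_eq_zero_of_one_sub_mulVec_apply_eq_zero [Ring R] {B : Matrix n n R} {ρ : n → ℕ}
    (hB : ∀ i j, B i j ≠ 0 → ρ j < ρ i) {x : n → R} {k : ℕ}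
    (hx : ∀ j, ρ j ≤ k → ((1 - B) *ᵥ x) j = 0) : ∀ j, ρ j ≤ k → x j = 0 := by
  intro j
  induction hm : ρ j using Nat.strong_induction_on generalizing j with
  | _ m ih =>
    intro hj
    have hBx : (B *ᵥ x) j = 0 := Finset.sum_eq_zero fun i _ => by
      change B j i * x i = 0
      by_cases hBji : B j i = 0
      · rw [hBji, zero_mul]
      · have hij := hm ▸ hB j i hBji
        rw [ih _ hij i rfl (hij.le.trans hj), mul_zero]
    simpa [sub_mulVec, hBx] using hx j (hm ▸ hj)

theorem isUnit_one_sub_of_lt [Field K] {B : Matrix n n K} {ρ : n → ℕ}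
    (hB : ∀ i j, B i j ≠ 0 → ρ j < ρ i) : IsUnit (1 - B) := by
  refine mulVec_injective_iff_isUnit.mp fun x y hxy => funext fun j => sub_eq_zero.mp ?_
  refine apply_eq_zero_of_one_sub_mulVec_apply_eq_zero hB (x := x - y) (k := ρ j)
    (fun i _ => ?_) j le_rfl
  simp [mulVec_sub, hxy]

theorem inv_one_sub_mulVec_apply_eq_zero [Field K] {B : Matrix n n K} {ρ : n → ℕ}
    (hB : ∀ i j, B i j ≠ 0 → ρ j < ρ i) {γ : n → K} {k : ℕ} (hγ : ∀ i, γ i ≠ 0 → k < ρ i) :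
    ∀ j, ρ j ≤ k → ((1 - B)⁻¹ *ᵥ γ) j = 0 := by
  refine apply_eq_zero_of_one_sub_mulVec_apply_eq_zero hB fun j hj => ?_
  rw [mulVec_mulVec, mul_nonsing_inv _ ((isUnit_iff_isUnit_det _).mp (isUnit_one_sub_of_lt hB)),
    one_mulVec]
  exact by_contra fun h => (hγ j h).not_ge hj

end Acyclic

section RankOne

variable [CommRing R]

theorem one_add_vecMulVec_mulVec (g b x : n → R) :
    (1 + vecMulVec g b) *ᵥ x = x + (b ⬝ᵥ x) • g := by
  rw [add_mulVec, one_mulVec, vecMulVec_mulVec, op_smul_eq_smul]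

theorem one_sub_vecMulVec_mul_one_add_vecMulVec {g b : n → R} (h : b ⬝ᵥ g = 0) :
    (1 - vecMulVec g b) * (1 + vecMulVec g b) = 1 := by
  rw [sub_mul, mul_add, mul_add, vecMulVec_mul_vecMulVec, h, zero_smul, vecMulVec_zero]
  simp

theorem one_sub_vecMulVec_add_eq_mul {B : Matrix n n R} (hB : IsUnit (1 - B)) (γ b : n → R) :
    1 - (vecMulVec γ b + B) = (1 - B) * (1 - vecMulVec ((1 - B)⁻¹ *ᵥ γ) b) := by
  rw [mul_sub, mul_one, mul_vecMulVec, mulVec_mulVec,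
    mul_nonsing_inv _ ((isUnit_iff_isUnit_det _).mp hB), one_mulVec]
  abel

theorem inv_one_sub_vecMulVec_add {B : Matrix n n R} (hB : IsUnit (1 - B)) {γ b : n → R}
    (h : b ⬝ᵥ ((1 - B)⁻¹ *ᵥ γ) = 0) :
    (1 - (vecMulVec γ b + B))⁻¹ = (1 + vecMulVec ((1 - B)⁻¹ *ᵥ γ) b) * (1 - B)⁻¹ := by
  refine inv_eq_right_inv ?_
  rw [one_sub_vecMulVec_add_eq_mul hB, Matrix.mul_assoc, ← Matrix.mul_assoc _ _ (1 - B)⁻¹,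
    one_sub_vecMulVec_mul_one_add_vecMulVec h, Matrix.one_mul,
    mul_nonsing_inv _ ((isUnit_iff_isUnit_det _).mp hB)]

theorem isUnit_one_sub_vecMulVec_add {B : Matrix n n R} (hB : IsUnit (1 - B)) {γ b : n → R}
    (h : b ⬝ᵥ ((1 - B)⁻¹ *ᵥ γ) = 0) : IsUnit (1 - (vecMulVec γ b + B)) := by
  rw [isUnit_iff_isUnit_det, one_sub_vecMulVec_add_eq_mul hB, det_mul]
  exact ((isUnit_iff_isUnit_det _).mp hB).mul
    (isUnit_det_of_right_inverse (one_sub_vecMulVec_mul_one_add_vecMulVec h))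

theorem inv_one_sub_vecMulVec_add_mulVec {B : Matrix n n R} (hB : IsUnit (1 - B)) {γ b : n → R}
    (h : b ⬝ᵥ ((1 - B)⁻¹ *ᵥ γ) = 0) :
    (1 - (vecMulVec γ b + B))⁻¹ *ᵥ γ = (1 - B)⁻¹ *ᵥ γ := by
  rw [inv_one_sub_vecMulVec_add hB h, ← mulVec_mulVec, one_add_vecMulVec_mulVec, h, zero_smul,
    add_zero]

theorem inv_one_sub_vecMulVec_add_conj {B : Matrix n n R} (hB : IsUnit (1 - B)) {γ b : n → R}
    (h : b ⬝ᵥ ((1 - B)⁻¹ *ᵥ γ) = 0) (D : Matrix n n R) :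
    (1 - (vecMulVec γ b + B))⁻¹ * D * ((1 - (vecMulVec γ b + B))⁻¹)ᵀ =
      (1 + vecMulVec ((1 - B)⁻¹ *ᵥ γ) b) * ((1 - B)⁻¹ * D * ((1 - B)⁻¹)ᵀ) *
        (1 + vecMulVec b ((1 - B)⁻¹ *ᵥ γ)) := by
  rw [inv_one_sub_vecMulVec_add hB h, transpose_mul, transpose_add, transpose_one,
    transpose_vecMulVec]
  simp only [Matrix.mul_assoc]

theorem one_add_vecMulVec_conj_residual (N : Matrix n n R) {g b : n → R} (h : b ⬝ᵥ g = 0)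
    (s : R) (v : n → R) :
    ((1 + vecMulVec g b) * N * (1 + vecMulVec b g)) *ᵥ b + s • g
        - ((1 + vecMulVec g b) * N * (1 + vecMulVec b g)) *ᵥ v =
      N *ᵥ ((1 - g ⬝ᵥ v) • b - v) + (b ⬝ᵥ N *ᵥ ((1 - g ⬝ᵥ v) • b - v) + s) • g := by
  have hc : (1 + vecMulVec b g) *ᵥ (b - v) = (1 - g ⬝ᵥ v) • b - v := by
    rw [one_add_vecMulVec_mulVec, dotProduct_sub, dotProduct_comm g b, h]
    module
  rw [add_sub_right_comm, ← mulVec_sub, ← mulVec_mulVec, ← mulVec_mulVec, hc,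
    one_add_vecMulVec_mulVec, add_assoc, ← add_smul]

end RankOne

end Matrix

section LinearMMSE

variable {n R : Type*}

def zeroExtend [DecidableEq n] [Zero R] (S : Finset n) (x : S → R) : n → R :=
  fun j => if hj : j ∈ S then x ⟨j, hj⟩ else 0

theorem zeroExtend_eq_iff [DecidableEq n] [Zero R] {S : Finset n} {x : S → R} {w : n → R} :
    zeroExtend S x = w ↔ (∀ j ∉ S, w j = 0) ∧ x = fun i : S => w i := by
  constructor
  · rintro rfl
    exact ⟨fun j hj => dif_neg hj, funext fun i => by simp [zeroExtend]⟩
  · rintro ⟨hw, rfl⟩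
    funext j
    by_cases hj : j ∈ S
    · exact dif_pos hj
    · exact (dif_neg hj).trans (hw j hj).symm

theorem submatrix_mulVec_restrict [Fintype n] [CommRing R] (M : Matrix n n R) {S : Finset n}
    {w : n → R} (hw : ∀ j ∉ S, w j = 0) (i : S) :
    (M.submatrix (Subtype.val : S → n) (Subtype.val : S → n) *ᵥ fun k : S => w k) i =
      (M *ᵥ w) i := by
  simp only [mulVec, dotProduct, submatrix_apply]
  rw [Finset.sum_coe_sort S (fun k => M i k * w k)]
  exact Finset.sum_subset (Finset.subset_univ S) fun k _ hk => by rw [hw k hk, mul_zero]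

/-- `θ_S`, extended by zeros, for `M = Σ_X` and `v = Σ_{XY}`. -/
noncomputable def lmmseCoef [Fintype n] [DecidableEq n] [CommRing R] (M : Matrix n n R)
    (v : n → R) (S : Finset n) : n → R :=
  zeroExtend S ((M.submatrix (Subtype.val : S → n) (Subtype.val : S → n))⁻¹ *ᵥ fun i : S => v i)

theorem lmmseCoef_eq_iff [Fintype n] [DecidableEq n] [CommRing R] {M : Matrix n n R}
    {v : n → R} {S : Finset n} (hM : IsUnit (M.submatrix (Subtype.val : S → n) (Subtype.val : S → n))) {w : n → R} :
    lmmseCoef M v S = w ↔ (∀ j ∉ S, w j = 0) ∧ ∀ i ∈ S, (M *ᵥ w) i = v i := by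
  have hdet : IsUnit (M.submatrix (Subtype.val : S → n) (Subtype.val : S → n)).det :=
    (isUnit_iff_isUnit_det _).mp hM
  rw [lmmseCoef, zeroExtend_eq_iff]
  refine and_congr_right fun hw => ?_
  rw [← (mulVec_injective_of_isUnit hM).eq_iff, mulVec_mulVec, mul_nonsing_inv _ hdet, one_mulVec, eq_comm, funext_iff]
  simp only [submatrix_mulVec_restrict M hw, Subtype.forall]

end LinearMMSE

theorem exists_lmmseCoef_eq_smul_add {n R E : Type*} [Fintype n] [DecidableEq n] [CommRing R]
    [Nonempty E] (N : Matrix n n R) (g : n → R) (s : R) (b : E → n → R) (S : Finset n)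
    (hbg : ∀ e, b e ⬝ᵥ g = 0) (hb : ∀ e e' j, b e j ≠ b e' j → j ∈ S ∧ g j = 0)
    (SX : E → Matrix n n R)
    (hSX : ∀ e, SX e = (1 + vecMulVec g (b e)) * N * (1 + vecMulVec (b e) g))
    (hS : ∀ e, IsUnit ((SX e).submatrix (Subtype.val : S → n) (Subtype.val : S → n))) :
    ∃ (lam : R) (eta : n → R), ∀ e,
      lmmseCoef (SX e) (SX e *ᵥ b e + s • g) S = lam • b e + eta := by
  have hres (e : E) (v : n → R) := hSX e ▸ one_add_vecMulVec_conj_residual N (hbg e) s v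
  obtain ⟨e₀⟩ := ‹Nonempty E›
  obtain ⟨ht₀S, ht₀⟩ := (lmmseCoef_eq_iff (hS e₀) (v := SX e₀ *ᵥ b e₀ + s • g)).mp rfl
  set t₀ := lmmseCoef (SX e₀) (SX e₀ *ᵥ b e₀ + s • g) S
  set lam := 1 - g ⬝ᵥ t₀
  set c := lam • b e₀ - t₀
  have hres₀ : ∀ i ∈ S, (N *ᵥ c) i + (b e₀ ⬝ᵥ N *ᵥ c + s) * g i = 0 := fun i hi => by
    simpa [ht₀ i hi] using (congrFun (hres e₀ t₀) i).symm
  have hbNc : ∀ e, b e ⬝ᵥ N *ᵥ c = b e₀ ⬝ᵥ N *ᵥ c := fun e =>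
    Finset.sum_congr rfl fun j _ => by
      by_cases hj : b e j = b e₀ j
      · rw [hj]
      · obtain ⟨hjS, hgj⟩ := hb e e₀ j hj
        have hNc : (N *ᵥ c) j = 0 := by simpa [hgj] using hres₀ j hjS
        rw [hNc, mul_zero, mul_zero]
  refine ⟨lam, t₀ - lam • b e₀, fun e =>
    (lmmseCoef_eq_iff (hS e)).mpr ⟨fun j hj => ?_, fun i hi => ?_⟩⟩
  · have hbj : b e j = b e₀ j := by_contra fun h => hj (hb e e₀ j h).1
    simp [hbj, ht₀S j hj]
  · set w := lam • b e + (t₀ - lam • b e₀)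
    have hc : (1 - g ⬝ᵥ w) • b e - w = c := by
      simp only [w, dotProduct_add, dotProduct_sub, dotProduct_smul, dotProduct_comm g (b _), hbg,
        smul_eq_mul, mul_zero, sub_zero]
      module
    have hresw := congrFun (hres e w) i
    rw [hc, hbNc] at hresw
    simp only [Pi.sub_apply, Pi.add_apply, Pi.smul_apply, smul_eq_mul, hres₀ i hi] at hresw
    exact (sub_eq_zero.mp hresw).symm

theorem stmt_9_general (d : ℕ)
    (γ β : Fin d → ℝ) (B : Matrix (Fin d) (Fin d) ℝ)
    (σdiag : Fin d → ℝ) (hσdiag : ∀ i, 0 < σdiag i)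
    (σ2 : ℝ) (hσ2 : 0 < σ2)
    (E : Type*) [Nonempty E] (α : E → Fin d → ℝ)
    (PE : Set (Fin d)) (hPE : PE = {j | ∃ e, α e j ≠ 0})
    (r : Fin d ⊕ Unit → ℕ)
    (hrB : ∀ i j, B i j ≠ 0 → r (Sum.inl j) < r (Sum.inl i))
    (hrγ : ∀ i, γ i ≠ 0 → r (Sum.inr ()) < r (Sum.inl i))
    (hrβ : ∀ j, (β j ≠ 0 ∨ j ∈ PE) → r (Sum.inl j) < r (Sum.inr ()))
    (C : E → Matrix (Fin d) (Fin d) ℝ)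
    (hC : ∀ e, C e = vecMulVec γ (β + α e) + B)
    (SX : E → Matrix (Fin d) (Fin d) ℝ)
    (hSX : ∀ e, SX e =
      (1 - C e)⁻¹ * (Matrix.diagonal σdiag + σ2 • vecMulVec γ γ) * ((1 - C e)⁻¹)ᵀ)
    (SXY : E → Fin d → ℝ)
    (hSXY : ∀ e, SXY e = SX e *ᵥ (β + α e) + σ2 • ((1 - C e)⁻¹ *ᵥ γ)) :
    (∀ e, IsUnit (1 - C e)) ∧
    (∀ e, (SX e).PosDef) ∧
    (∀ S : Finset (Fin d), (∀ j, j ∈ PE → j ∈ S) →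
      ∃ (lamY : ℝ) (etaY : Fin d → ℝ), ∀ e,
        (fun j => if hj : j ∈ S then
            (((SX e).submatrix (Subtype.val : {x // x ∈ S} → Fin d)
                (Subtype.val : {x // x ∈ S} → Fin d))⁻¹ *ᵥ
              (fun i : {x // x ∈ S} => SXY e i.val)) ⟨j, hj⟩
          else 0) = lamY • (β + α e) + etaY) := by
  set b : E → Fin d → ℝ := fun e => β + α e
  have hα : ∀ e j, j ∉ PE → α e j = 0 := fun e j hj => by_contra fun h => hj (hPE ▸ ⟨e, h⟩)
  have hBunit : IsUnit (1 - B) := isUnit_one_sub_of_lt hrB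
  set g := (1 - B)⁻¹ *ᵥ γ
  have hg : ∀ j, r (.inl j) ≤ r (.inr ()) → g j = 0 := inv_one_sub_mulVec_apply_eq_zero hrB hrγ
  have hbg : ∀ e, b e ⬝ᵥ g = 0 := fun e => Finset.sum_eq_zero fun j _ => by
    by_cases hj : β j ≠ 0 ∨ j ∈ PE
    · rw [hg j (hrβ j hj).le, mul_zero]
    · rw [not_or, not_not] at hj
      simp [b, hj.1, hα e j hj.2]
  have hCunit e : IsUnit (1 - C e) := hC e ▸ isUnit_one_sub_vecMulVec_add hBunit (hbg e)
  have hD : (diagonal σdiag + σ2 • vecMulVec γ γ).PosDef :=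
    (PosDef.diagonal hσdiag).add_posSemidef ((posSemidef_vecMulVec_self_star γ).smul hσ2.le)
  have hSXpd e : (SX e).PosDef := by
    simpa [hSX e] using hD.mul_mul_conjTranspose_same
      (vecMul_injective_of_isUnit (isUnit_nonsing_inv_iff.mpr (hCunit e)))
  refine ⟨hCunit, hSXpd, fun S hS => ?_⟩
  have hb : ∀ e e' j, b e j ≠ b e' j → j ∈ S ∧ g j = 0 := fun e e' j h => by
    by_cases hj : j ∈ PE
    · exact ⟨hS j hj, hg j (hrβ j (.inr hj)).le⟩
    · simp [b, hα e j hj, hα e' j hj] at h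
  obtain ⟨lam, eta, h⟩ := exists_lmmseCoef_eq_smul_add _ g σ2 b S hbg hb SX
    (fun e => by rw [hSX e, hC e, inv_one_sub_vecMulVec_add_conj hBunit (hbg e)])
    fun e => ((hSXpd e).submatrix Subtype.val_injective).isUnit
  refine ⟨lam, eta, fun e => ?_⟩
  rw [hSXY e, hC e, inv_one_sub_vecMulVec_add_mulVec hBunit (hbg e)]
  exact h e

/-- First matching property, in second-moment form. For the acyclic
linear SCM with interventions on the response, `C(e) = γ (β + α(e))ᵀ + B`,
`Σ_X(e) = (I − C(e))⁻¹ (Σ + σ² γ γᵀ) (I − C(e))⁻ᵀ`, and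
`Σ_{XY}(e) = Σ_X(e)(β + α(e)) + σ² (I − C(e))⁻¹ γ`: `I − C(e)` is invertible for every
`e`, `Σ_X(e)` is positive definite, and for every `S ⊇ PE` the zero-extension of the
population coefficient `θ_S(e) = ((Σ_X(e))_{S,S})⁻¹ (Σ_{XY}(e))_S` of the linear MMSE
prediction of `Y` from `X_S` equals `λ_Y (β + α(e)) + η_Y` for some environment-invariant
`λ_Y ∈ ℝ`, `η_Y ∈ ℝ^d`. -/
theorem stmt_9 (d : ℕ) (hd : 1 ≤ d)
    (γ β : Fin d → ℝ) (B : Matrix (Fin d) (Fin d) ℝ)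
    (σdiag : Fin d → ℝ) (hσdiag : ∀ i, 0 < σdiag i)
    (σ2 : ℝ) (hσ2 : 0 < σ2)
    (E : Type*) [Nonempty E] (α : E → Fin d → ℝ)
    (PE : Set (Fin d)) (hPE : PE = {j | ∃ e, α e j ≠ 0})
    (r : Fin d ⊕ Unit → ℕ) (hrinj : Function.Injective r)
    (hrB : ∀ i j, B i j ≠ 0 → r (Sum.inl j) < r (Sum.inl i))
    (hrγ : ∀ i, γ i ≠ 0 → r (Sum.inr ()) < r (Sum.inl i))
    (hrβ : ∀ j, (β j ≠ 0 ∨ j ∈ PE) → r (Sum.inl j) < r (Sum.inr ()))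
    (C : E → Matrix (Fin d) (Fin d) ℝ)
    (hC : ∀ e, C e = vecMulVec γ (β + α e) + B)
    (SX : E → Matrix (Fin d) (Fin d) ℝ)
    (hSX : ∀ e, SX e =
      (1 - C e)⁻¹ * (Matrix.diagonal σdiag + σ2 • vecMulVec γ γ) * ((1 - C e)⁻¹)ᵀ)
    (SXY : E → Fin d → ℝ)
    (hSXY : ∀ e, SXY e = SX e *ᵥ (β + α e) + σ2 • ((1 - C e)⁻¹ *ᵥ γ)) :
    (∀ e, IsUnit (1 - C e)) ∧
    (∀ e, (SX e).PosDef) ∧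
    (∀ S : Finset (Fin d), (∀ j, j ∈ PE → j ∈ S) →
      ∃ (lamY : ℝ) (etaY : Fin d → ℝ), ∀ e,
        (fun j => if hj : j ∈ S then
            (((SX e).submatrix (Subtype.val : {x // x ∈ S} → Fin d)
                (Subtype.val : {x // x ∈ S} → Fin d))⁻¹ *ᵥ
              (fun i : {x // x ∈ S} => SXY e i.val)) ⟨j, hj⟩
          else 0) = lamY • (β + α e) + etaY) :=
  stmt_9_general d γ β B σdiag hσdiag σ2 hσ2 E α PE hPE r hrB hrγ hrβ C hC SX hSX SXY hSXY
end

section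
/- Consider a linear structural causal model with interventions on the response, in second-moment form: fix d ≥ 1, γ, β ∈ ℝ^d, B ∈ ℝ^{d×d}, a diagonal matrix Σ ∈ ℝ^{d×d} with positive diagonal entries, σ² > 0, a nonempty set E of environments, and α : E → ℝ^d; set PE := {j : ∃ e ∈ E, α(e)_j ≠ 0}, assume acyclicity (there is an injective function r from {1,…,d} ∪ {Y} to ℕ with B_{ij} ≠ 0 ⟹ r(j) < r(i), γ_i ≠ 0 ⟹ r(Y) < r(i), and (β_j ≠ 0 or j ∈ PE) ⟹ r(j) < r(Y)), define C(e) := γ (β + α(e))^⊤ + B, and set Σ_X(e) := (I − C(e))^{-1}(Σ + σ² γ γ^⊤)(I − C(e))^{-⊤}. Then for every index k ∈ {1,…,d} with k ∉ PE and every subset R with PE ⊆ R ⊆ {1,…,d} \ {k}, there exist λ_X ∈ ℝ and η_X ∈ ℝ^d, not depending on e, such that for every e ∈ E the vector θ_{k,R}(e) := ((Σ_X(e))_{R,R})^{-1} ((Σ_X(e))_{R,{k}}), extended by zeros to a vector in ℝ^d, equals λ_X (β + α(e)) + η_X. -/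
open Matrix


namespace Stmt10Aux

variable {d : ℕ}

lemma vmv_mulVec (x y z : Fin d → ℝ) : vecMulVec x y *ᵥ z = (y ⬝ᵥ z) • x := by
  ext i
  simp only [mulVec, dotProduct, vecMulVec_apply, Pi.smul_apply, smul_eq_mul]
  rw [Finset.sum_mul]
  exact Finset.sum_congr rfl fun j _ => by ring

lemma mul_vmv (M : Matrix (Fin d) (Fin d) ℝ) (x y : Fin d → ℝ) :
    M * vecMulVec x y = vecMulVec (M *ᵥ x) y := by
  ext i j
  simp only [Matrix.mul_apply, vecMulVec_apply, mulVec, dotProduct]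
  rw [Finset.sum_mul]
  exact Finset.sum_congr rfl fun l _ => by ring

lemma vmv_mul (M : Matrix (Fin d) (Fin d) ℝ) (x y : Fin d → ℝ) :
    vecMulVec x y * M = vecMulVec x (Mᵀ *ᵥ y) := by
  ext i j
  simp only [Matrix.mul_apply, vecMulVec_apply, mulVec, dotProduct, transpose_apply]
  rw [Finset.mul_sum]
  exact Finset.sum_congr rfl fun l _ => by ring

lemma vmv_vmv (x y z w : Fin d → ℝ) :
    vecMulVec x y * vecMulVec z w = (y ⬝ᵥ z) • vecMulVec x w := by
  ext i j
  simp only [Matrix.mul_apply, vecMulVec_apply, dotProduct, Pi.smul_apply, smul_eq_mul,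
    Matrix.smul_apply]
  rw [Finset.sum_mul]
  exact Finset.sum_congr rfl fun l _ => by ring

lemma transpose_vmv (x y : Fin d → ℝ) : (vecMulVec x y)ᵀ = vecMulVec y x := by
  ext i j
  simp [vecMulVec_apply, mul_comm]

lemma mulVec_submatrix (R : Finset (Fin d)) (M : Matrix (Fin d) (Fin d) ℝ) (u : Fin d → ℝ)
    (hx : ∀ j, j ∉ R → u j = 0) (i : {x // x ∈ R}) :
    (M.submatrix (Subtype.val : {x // x ∈ R} → Fin d) (Subtype.val : {x // x ∈ R} → Fin d)
        *ᵥ (u ∘ (Subtype.val : {x // x ∈ R} → Fin d))) i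
      = (M *ᵥ u) i.val := by
  simp only [mulVec, dotProduct, submatrix_apply, Function.comp]
  rw [Finset.sum_coe_sort R (fun j => M i.val j * u j)]
  exact Finset.sum_subset (Finset.subset_univ R) (fun j _ hj => by rw [hx j hj, mul_zero])

lemma tri_vanish (B : Matrix (Fin d) (Fin d) ℝ) (ρ : Fin d → ℕ)
    (hB : ∀ i j, B i j ≠ 0 → ρ j < ρ i) (x g : Fin d → ℝ)
    (hx : ∀ j, x j = g j + (B *ᵥ x) j)
    (P : Fin d → Prop) (hg : ∀ j, P j → g j = 0)
    (hdown : ∀ i j, P i → ρ j < ρ i → P j) :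
    ∀ j, P j → x j = 0 := by
  have H : ∀ n (j : Fin d), ρ j ≤ n → P j → x j = 0 := by
    intro n
    induction n with
    | zero =>
      intro j hj hP
      rw [hx j, hg j hP, zero_add]
      simp only [mulVec, dotProduct]
      apply Finset.sum_eq_zero
      intro l _
      by_cases h : B j l = 0
      · rw [h, zero_mul]
      · exact absurd (hB j l h) (by omega)
    | succ n ih =>
      intro j hj hP
      rw [hx j, hg j hP, zero_add]
      simp only [mulVec, dotProduct]
      apply Finset.sum_eq_zero
      intro l _
      by_cases h : B j l = 0
      · rw [h, zero_mul]
      · rw [ih l (by have := hB j l h; omega) (hdown j l hP (hB j l h)), mul_zero]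
  intro j hP
  exact H (ρ j) j le_rfl hP

lemma posdef_sub_det (M : Matrix (Fin d) (Fin d) ℝ)
    (h : ∀ x, x ≠ 0 → 0 < x ⬝ᵥ (M *ᵥ x)) (R : Finset (Fin d)) :
    IsUnit (M.submatrix (Subtype.val : {x // x ∈ R} → Fin d) Subtype.val).det := by
  classical
  rw [isUnit_iff_ne_zero]
  intro hdet
  obtain ⟨y, hy0, hy⟩ := Matrix.exists_mulVec_eq_zero_iff.mpr hdet
  set xb : Fin d → ℝ := fun j => if hj : j ∈ R then y ⟨j, hj⟩ else 0 with hxb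
  have hxbz : ∀ j, j ∉ R → xb j = 0 := fun j hj => dif_neg hj
  have hcomp : xb ∘ Subtype.val = y := funext fun i => by
    simp only [hxb, Function.comp_apply, dif_pos i.2]
  have hxbne : xb ≠ 0 := by
    intro h0
    apply hy0
    funext i
    have := congrFun h0 i.val
    simpa [hxb, dif_pos i.2] using this
  have hdot : xb ⬝ᵥ (M *ᵥ xb) = 0 := by
    have : xb ⬝ᵥ (M *ᵥ xb) = ∑ i : {x // x ∈ R}, y i *
        ((M.submatrix (Subtype.val : {x // x ∈ R} → Fin d) Subtype.val) *ᵥ y) i := by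
      rw [dotProduct]
      rw [← Finset.sum_subset (Finset.subset_univ R)
        (fun j _ hj => by rw [hxbz j hj, zero_mul])]
      rw [← Finset.sum_coe_sort R (fun j => xb j * (M *ᵥ xb) j)]
      refine Finset.sum_congr rfl fun i _ => ?_
      have h1 : ((M.submatrix (Subtype.val : {x // x ∈ R} → Fin d) Subtype.val) *ᵥ y) i
          = (M *ᵥ xb) i.val := by
        rw [← hcomp]
        exact mulVec_submatrix R M xb hxbz i
      rw [h1, ← hcomp]
      simp [Function.comp]
    rw [this, hy]
    simp
  have := h xb hxbne
  linarith

end Stmt10Aux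

/-- Second matching property, in second-moment form. For the acyclic
linear SCM with interventions on the response, `C(e) = γ (β + α(e))ᵀ + B` and
`Σ_X(e) = (I − C(e))⁻¹ (Σ + σ² γ γᵀ) (I − C(e))⁻ᵀ`: for every `k ∉ PE` and every
`R` with `PE ⊆ R ⊆ {1,…,d} \ {k}`, the zero-extension of the prediction-module
coefficient `θ_{k,R}(e) = ((Σ_X(e))_{R,R})⁻¹ (Σ_X(e))_{R,{k}}` equals
`λ_X (β + α(e)) + η_X` for some environment-invariant `λ_X ∈ ℝ`, `η_X ∈ ℝ^d`. -/
theorem stmt_10 (d : ℕ) (hd : 1 ≤ d)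
    (γ β : Fin d → ℝ) (B : Matrix (Fin d) (Fin d) ℝ)
    (σdiag : Fin d → ℝ) (hσdiag : ∀ i, 0 < σdiag i)
    (σ2 : ℝ) (hσ2 : 0 < σ2)
    (E : Type*) [Nonempty E] (α : E → Fin d → ℝ)
    (PE : Set (Fin d)) (hPE : PE = {j | ∃ e, α e j ≠ 0})
    (r : Fin d ⊕ Unit → ℕ) (hrinj : Function.Injective r)
    (hrB : ∀ i j, B i j ≠ 0 → r (Sum.inl j) < r (Sum.inl i))
    (hrγ : ∀ i, γ i ≠ 0 → r (Sum.inr ()) < r (Sum.inl i))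
    (hrβ : ∀ j, (β j ≠ 0 ∨ j ∈ PE) → r (Sum.inl j) < r (Sum.inr ()))
    (C : E → Matrix (Fin d) (Fin d) ℝ)
    (hC : ∀ e, C e = vecMulVec γ (β + α e) + B)
    (SX : E → Matrix (Fin d) (Fin d) ℝ)
    (hSX : ∀ e, SX e =
      (1 - C e)⁻¹ * (Matrix.diagonal σdiag + σ2 • vecMulVec γ γ) * ((1 - C e)⁻¹)ᵀ) :
    ∀ k : Fin d, k ∉ PE →
      ∀ R : Finset (Fin d), (∀ j, j ∈ PE → j ∈ R) → k ∉ R →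
        ∃ (lamX : ℝ) (etaX : Fin d → ℝ), ∀ e,
          (fun j => if hj : j ∈ R then
              (((SX e).submatrix (Subtype.val : {x // x ∈ R} → Fin d)
                  (Subtype.val : {x // x ∈ R} → Fin d))⁻¹ *ᵥ
                (fun i : {x // x ∈ R} => SX e i.val k)) ⟨j, hj⟩
            else 0) = lamX • (β + α e) + etaX := by
  intro k hkPE R hPER hkR
  classical
  -- support facts
  have hαPE : ∀ e j, α e j ≠ 0 → j ∈ PE := by
    intro e j hj; rw [hPE]; exact ⟨e, hj⟩
  have hPED : ∀ j, j ∈ PE → r (Sum.inl j) < r (Sum.inr ()) :=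
    fun j hj => hrβ j (Or.inr hj)
  have hβD : ∀ j, β j ≠ 0 → r (Sum.inl j) < r (Sum.inr ()) :=
    fun j hj => hrβ j (Or.inl hj)
  set A : Matrix (Fin d) (Fin d) ℝ := 1 - B with hAdef
  have hAdet : IsUnit A.det := by
    rw [isUnit_iff_ne_zero]
    intro h
    obtain ⟨v, hv0, hv⟩ := Matrix.exists_mulVec_eq_zero_iff.mpr h
    apply hv0
    funext j
    refine Stmt10Aux.tri_vanish B (fun j => r (Sum.inl j)) hrB v 0 ?_
      (fun _ => True) (fun _ _ => rfl) (fun _ _ _ _ => trivial) j trivial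
    intro j'
    have h1 := congrFun hv j'
    simp only [hAdef, Matrix.sub_mulVec, Matrix.one_mulVec, Pi.sub_apply, Pi.zero_apply] at h1
    simp only [Pi.zero_apply, zero_add]
    linarith
  set Ai := A⁻¹ with hAidef
  have hAAi : A * Ai = 1 := Matrix.mul_nonsing_inv A hAdet
  have hAiA : Ai * A = 1 := Matrix.nonsing_inv_mul A hAdet
  set a := Ai *ᵥ γ with hadef
  have hAa : A *ᵥ a = γ := by
    rw [hadef, Matrix.mulVec_mulVec, hAAi, Matrix.one_mulVec]
  have haD : ∀ j, r (Sum.inl j) < r (Sum.inr ()) → a j = 0 := by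
    intro j hj
    refine Stmt10Aux.tri_vanish B (fun j => r (Sum.inl j)) hrB a γ ?_
      (fun j => r (Sum.inl j) < r (Sum.inr ()))
      (fun j hj => by by_contra hne; have := hrγ j hne; omega)
      (fun i j hi hij => lt_trans hij hi) j hj
    intro j'
    have h1 := congrFun hAa j'
    simp only [hAdef, Matrix.sub_mulVec, Matrix.one_mulVec, Pi.sub_apply] at h1
    linarith
  have hdot0 : ∀ p : Fin d → ℝ, (∀ j, p j ≠ 0 → r (Sum.inl j) < r (Sum.inr ())) →
      p ⬝ᵥ a = 0 := by
    intro p hp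
    apply Finset.sum_eq_zero
    intro j _
    by_cases h : p j = 0
    · rw [h, zero_mul]
    · rw [haD j (hp j h), mul_zero]
  have haβ : β ⬝ᵥ a = 0 := hdot0 β hβD
  have haα : ∀ e, α e ⬝ᵥ a = 0 :=
    fun e => hdot0 _ (fun j hj => hPED j (hαPE e j hj))
  have hav : ∀ e, (β + α e) ⬝ᵥ a = 0 := by
    intro e; rw [add_dotProduct, haβ, haα, add_zero]
  set D : Matrix (Fin d) (Fin d) ℝ := Matrix.diagonal σdiag with hDdef
  set S0 := Ai * D * Aiᵀ with hS0def
  have hS0sym : S0ᵀ = S0 := by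
    rw [hS0def, Matrix.transpose_mul, Matrix.transpose_mul, Matrix.transpose_transpose,
      hDdef, Matrix.diagonal_transpose, Matrix.mul_assoc]
  -- symmetric dot product fact
  have hqy : ∀ p y : Fin d → ℝ, (S0 *ᵥ p) ⬝ᵥ y = p ⬝ᵥ (S0 *ᵥ y) := by
    intro p y
    have h1 : p ⬝ᵥ (S0 *ᵥ y) = (p ᵥ* S0) ⬝ᵥ y := Matrix.dotProduct_mulVec p S0 y
    have h2 : p ᵥ* S0 = S0 *ᵥ p := by
      conv_lhs => rw [← hS0sym]
      rw [Matrix.vecMul_transpose]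
    rw [h1, h2]
  set F : (Fin d → ℝ) → Matrix (Fin d) (Fin d) ℝ := fun p =>
    S0 + vecMulVec (S0 *ᵥ p) a + vecMulVec a (S0 *ᵥ p)
      + (σ2 + p ⬝ᵥ (S0 *ᵥ p)) • vecMulVec a a with hFdef
  have hSXF : ∀ e, SX e = F (β + α e) := by
    intro e
    set v := β + α e with hvdef
    set w := Aiᵀ *ᵥ v with hwdef
    set N := Ai + vecMulVec a w with hNdef
    have hva : v ⬝ᵥ a = 0 := hav e
    have hone : (1 - C e) * N = 1 := by
      have h1 : 1 - C e = A - vecMulVec γ v := by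
        rw [hC e, hAdef, hvdef]; abel
      rw [h1, hNdef, Matrix.sub_mul, Matrix.mul_add, Matrix.mul_add, hAAi,
        Stmt10Aux.mul_vmv, hAa, Stmt10Aux.vmv_mul, Stmt10Aux.vmv_vmv, ← hwdef,
        hva, zero_smul, add_zero]
      abel
    have hCinv : (1 - C e)⁻¹ = N := Matrix.inv_eq_right_inv hone
    have hwγ : w ⬝ᵥ γ = 0 := by
      rw [hwdef, dotProduct_comm, Matrix.dotProduct_mulVec, Matrix.vecMul_transpose,
        ← hadef, dotProduct_comm, hva]
    have hNγ : N *ᵥ γ = a := by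
      rw [hNdef, Matrix.add_mulVec, Stmt10Aux.vmv_mulVec, hwγ, zero_smul, add_zero, ← hadef]
    have hNT : Nᵀ = Aiᵀ + vecMulVec w a := by
      rw [hNdef, Matrix.transpose_add, Stmt10Aux.transpose_vmv]
    have hDS : (Ai * D) *ᵥ w = S0 *ᵥ v := by
      rw [hwdef, Matrix.mulVec_mulVec, ← hS0def]
    have hdw : (D *ᵥ w) ⬝ᵥ w = v ⬝ᵥ (S0 *ᵥ v) := by
      rw [← hDS, ← Matrix.mulVec_mulVec, Matrix.dotProduct_mulVec v Ai,
        ← Matrix.mulVec_transpose, ← hwdef, Matrix.dotProduct_mulVec w D,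
        ← Matrix.mulVec_transpose, hDdef, Matrix.diagonal_transpose, ← hDdef]
    have hNg : N * (σ2 • vecMulVec γ γ) * Nᵀ = σ2 • vecMulVec a a := by
      rw [Matrix.mul_smul, Matrix.smul_mul, Stmt10Aux.mul_vmv, hNγ, Stmt10Aux.vmv_mul,
        Matrix.transpose_transpose, hNγ]
    have hND : N * D * Nᵀ = S0 + vecMulVec (S0 *ᵥ v) a + vecMulVec a (S0 *ᵥ v)
        + (v ⬝ᵥ (S0 *ᵥ v)) • vecMulVec a a := by
      have hND1 : N * D = Ai * D + vecMulVec a (D *ᵥ w) := by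
        rw [hNdef, Matrix.add_mul, Stmt10Aux.vmv_mul, hDdef, Matrix.diagonal_transpose, ← hDdef]
      rw [hND1, hNT, Matrix.add_mul, Matrix.mul_add, Matrix.mul_add, ← hS0def,
        Stmt10Aux.mul_vmv, hDS, Stmt10Aux.vmv_mul, Matrix.transpose_transpose,
        Matrix.mulVec_mulVec, hDS, Stmt10Aux.vmv_vmv, hdw]
      abel
    rw [hSX e, hCinv, Matrix.mul_add, Matrix.add_mul, hND, hNg]
    simp only [hFdef]
    rw [add_smul]
    abel
  have hkey : ∀ (p y : Fin d → ℝ) (lam : ℝ), a ⬝ᵥ y = -lam →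
      F p *ᵥ y = S0 *ᵥ (y - lam • p) + ((p ⬝ᵥ (S0 *ᵥ (y - lam • p))) - lam * σ2) • a := by
    intro p y lam hay
    simp only [hFdef]
    rw [Matrix.add_mulVec, Matrix.add_mulVec, Matrix.add_mulVec,
      Stmt10Aux.vmv_mulVec, Stmt10Aux.vmv_mulVec, Matrix.smul_mulVec,
      Stmt10Aux.vmv_mulVec, hay, hqy p y, Matrix.mulVec_sub, Matrix.mulVec_smul,
      dotProduct_sub, dotProduct_smul]
    funext i
    simp only [Pi.add_apply, Pi.sub_apply, Pi.smul_apply, smul_eq_mul]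
    ring
  have hS0q : ∀ z : Fin d → ℝ, z ⬝ᵥ (S0 *ᵥ z) = (Aiᵀ *ᵥ z) ⬝ᵥ (D *ᵥ (Aiᵀ *ᵥ z)) := by
    intro z
    rw [hS0def, ← Matrix.mulVec_mulVec, ← Matrix.mulVec_mulVec,
      Matrix.dotProduct_mulVec z Ai, ← Matrix.mulVec_transpose]
  have hS0pos : ∀ z : Fin d → ℝ, z ≠ 0 → 0 < z ⬝ᵥ (S0 *ᵥ z) := by
    intro z hz
    rw [hS0q]
    set u := Aiᵀ *ᵥ z with hu
    have hune : u ≠ 0 := by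
      intro h0
      apply hz
      have hzz : Aᵀ *ᵥ u = z := by
        rw [hu, Matrix.mulVec_mulVec, ← Matrix.transpose_mul, hAiA, Matrix.transpose_one,
          Matrix.one_mulVec]
      rw [← hzz, h0, Matrix.mulVec_zero]
    have hcoord : u ⬝ᵥ (D *ᵥ u) = ∑ i, σdiag i * (u i)^2 := by
      simp only [dotProduct, hDdef, Matrix.mulVec_diagonal]
      exact Finset.sum_congr rfl fun i _ => by ring
    rw [hcoord]
    obtain ⟨i0, hi0⟩ : ∃ i, u i ≠ 0 := by
      by_contra hc; push_neg at hc; exact hune (funext hc)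
    exact Finset.sum_pos' (fun i _ => by have := hσdiag i; positivity)
      ⟨i0, Finset.mem_univ i0, by have := hσdiag i0; positivity⟩
  have hS0nonneg : ∀ z : Fin d → ℝ, 0 ≤ z ⬝ᵥ (S0 *ᵥ z) := by
    intro z
    rcases eq_or_ne z 0 with h | h
    · simp [h]
    · exact le_of_lt (hS0pos z h)
  have hFpos : ∀ (p x : Fin d → ℝ), x ≠ 0 → 0 < x ⬝ᵥ (F p *ᵥ x) := by
    intro p x hx
    set c := a ⬝ᵥ x with hc
    have h1 : x ⬝ᵥ (S0 *ᵥ p) = p ⬝ᵥ (S0 *ᵥ x) := by rw [dotProduct_comm, hqy]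
    have h2 : x ⬝ᵥ a = a ⬝ᵥ x := dotProduct_comm x a
    have hid : x ⬝ᵥ (F p *ᵥ x) = (x + c • p) ⬝ᵥ (S0 *ᵥ (x + c • p)) + σ2 * c^2 := by
      simp only [hFdef]
      rw [Matrix.add_mulVec, Matrix.add_mulVec, Matrix.add_mulVec,
        Stmt10Aux.vmv_mulVec, Stmt10Aux.vmv_mulVec, Matrix.smul_mulVec,
        Stmt10Aux.vmv_mulVec, hqy p x, Matrix.mulVec_add, Matrix.mulVec_smul]
      simp only [dotProduct_add, add_dotProduct, dotProduct_smul, smul_dotProduct,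
        smul_eq_mul]
      rw [h1, h2, ← hc]
      ring
    rw [hid]
    rcases eq_or_ne c 0 with h | h
    · rw [h]
      simp only [zero_smul, add_zero]
      have := hS0pos x hx
      nlinarith
    · have hp1 : 0 < σ2 * c^2 := by positivity
      have hp2 := hS0nonneg (x + c • p)
      linarith
  -- the reference ("beta") regression
  set g := F β with hgdef
  have hgpos : ∀ x, x ≠ 0 → 0 < x ⬝ᵥ (g *ᵥ x) := fun x hx => hFpos β x hx
  have hgdet : IsUnit (g.submatrix (Subtype.val : {x // x ∈ R} → Fin d)
      (Subtype.val : {x // x ∈ R} → Fin d)).det :=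
    Stmt10Aux.posdef_sub_det g hgpos R
  set gs := g.submatrix (Subtype.val : {x // x ∈ R} → Fin d)
    (Subtype.val : {x // x ∈ R} → Fin d) with hgsdef
  set tβ : {x // x ∈ R} → ℝ := gs⁻¹ *ᵥ (fun i => g i.val k) with htβ
  set T : Fin d → ℝ := fun j => if hj : j ∈ R then tβ ⟨j, hj⟩ else 0 with hT
  have hTz : ∀ j, j ∉ R → T j = 0 := fun j hj => dif_neg hj
  have hTval : T ∘ (Subtype.val : {x // x ∈ R} → Fin d) = tβ := funext fun i => by
    simp only [hT, Function.comp_apply, dif_pos i.2, Subtype.coe_eta]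
  set ek : Fin d → ℝ := Pi.single k 1 with hek
  set u : Fin d → ℝ := T - ek with hu
  set lam : ℝ := -(a ⬝ᵥ u) with hlam
  have hau : a ⬝ᵥ u = -lam := by rw [hlam]; ring
  have hgsol : gs *ᵥ tβ = (fun i : {x // x ∈ R} => g i.val k) := by
    rw [htβ, Matrix.mulVec_mulVec, Matrix.mul_nonsing_inv gs hgdet, Matrix.one_mulVec]
  have hgu : ∀ j, j ∈ R → (g *ᵥ u) j = 0 := by
    intro j hj
    have hTu : (g *ᵥ T) j = g j k := by
      have h3 := Stmt10Aux.mulVec_submatrix R g T hTz ⟨j, hj⟩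
      rw [hTval] at h3
      rw [← h3, hgsol]
    have hgek : (g *ᵥ ek) j = g j k := by
      simp [hek, Matrix.mulVec_single]
    rw [hu, Matrix.mulVec_sub, Pi.sub_apply, hTu, hgek, sub_self]
  set m0 : Fin d → ℝ := u - lam • β with hm0
  have hgu_formula : g *ᵥ u = S0 *ᵥ m0 + ((β ⬝ᵥ (S0 *ᵥ m0)) - lam * σ2) • a := by
    have h4 := hkey β u lam hau
    rw [← hm0] at h4
    rw [hgdef]
    exact h4
  have hm0PE : ∀ j, j ∈ PE → (S0 *ᵥ m0) j = 0 := by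
    intro j hj
    have h0 := hgu j (hPER j hj)
    rw [hgu_formula] at h0
    simp only [Pi.add_apply, Pi.smul_apply, smul_eq_mul] at h0
    rw [haD j (hPED j hj), mul_zero, add_zero] at h0
    exact h0
  refine ⟨lam, T - lam • β, fun e => ?_⟩
  set ψ : Fin d → ℝ := fun j => lam * α e j + T j with hψ
  have hψz : ∀ j, j ∉ R → ψ j = 0 := by
    intro j hj
    have hαz : α e j = 0 := by
      by_contra hne
      exact hj (hPER j (hαPE e j hne))
    simp only [hψ]
    rw [hαz, hTz j hj, mul_zero, add_zero]
  set z : Fin d → ℝ := u + lam • α e with hz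
  have haz : a ⬝ᵥ z = -lam := by
    rw [hz, dotProduct_add, hau, dotProduct_smul]
    rw [dotProduct_comm a (α e), haα e]
    simp
  have hzm : z - lam • (β + α e) = m0 := by
    funext l
    simp only [hz, hm0, hu, Pi.add_apply, Pi.sub_apply, Pi.smul_apply, smul_eq_mul]
    ring
  have hFz : ∀ j, j ∈ R → (F (β + α e) *ᵥ z) j = 0 := by
    intro j hj
    have hk2 := hkey (β + α e) z lam haz
    rw [hzm] at hk2
    have hvm : (β + α e) ⬝ᵥ (S0 *ᵥ m0) = β ⬝ᵥ (S0 *ᵥ m0) := by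
      rw [add_dotProduct]
      have hα0 : α e ⬝ᵥ (S0 *ᵥ m0) = 0 := by
        apply Finset.sum_eq_zero
        intro l _
        by_cases hl : α e l = 0
        · rw [hl, zero_mul]
        · rw [hm0PE l (hαPE e l hl), mul_zero]
      rw [hα0, add_zero]
    rw [hk2, hvm, ← hgu_formula]
    exact hgu j hj
  have hψsol : ((SX e).submatrix (Subtype.val : {x // x ∈ R} → Fin d)
        (Subtype.val : {x // x ∈ R} → Fin d))
      *ᵥ (ψ ∘ (Subtype.val : {x // x ∈ R} → Fin d))
      = (fun i : {x // x ∈ R} => SX e i.val k) := by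
    funext i
    rw [Stmt10Aux.mulVec_submatrix R (SX e) ψ hψz i]
    have hψzek : ψ = z + ek := by
      funext l
      simp only [hψ, hz, hu, Pi.add_apply, Pi.sub_apply, Pi.smul_apply, smul_eq_mul]
      ring
    rw [hψzek, hSXF e, Matrix.mulVec_add, Pi.add_apply, hFz i.val i.2, zero_add]
    simp [hek, Matrix.mulVec_single]
  have hsdet : IsUnit (((SX e).submatrix (Subtype.val : {x // x ∈ R} → Fin d)
      (Subtype.val : {x // x ∈ R} → Fin d))).det := by
    apply Stmt10Aux.posdef_sub_det
    intro x hx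
    rw [hSXF e]
    exact hFpos (β + α e) x hx
  have hθ : ((SX e).submatrix (Subtype.val : {x // x ∈ R} → Fin d)
        (Subtype.val : {x // x ∈ R} → Fin d))⁻¹
      *ᵥ (fun i : {x // x ∈ R} => SX e i.val k)
      = ψ ∘ (Subtype.val : {x // x ∈ R} → Fin d) := by
    rw [← hψsol, Matrix.mulVec_mulVec, Matrix.nonsing_inv_mul _ hsdet, Matrix.one_mulVec]
  funext j
  by_cases hj : j ∈ R
  · simp only [dif_pos hj]
    rw [hθ]
    simp only [hψ, Function.comp_apply, Pi.add_apply, Pi.smul_apply, Pi.sub_apply, smul_eq_mul]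
    ring
  · simp only [dif_neg hj]
    have hαz : α e j = 0 := by
      by_contra hne
      exact hj (hPER j (hαPE e j hne))
    simp only [Pi.add_apply, Pi.smul_apply, Pi.sub_apply, smul_eq_mul]
    rw [hαz, hTz j hj]
    ring
end
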